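/- arXiv:2109.13041 — 3 statements merged into one kernel-verified Lean document; each statement's English description precedes it below -/
import Mathlib

section
/- For x > R and y = 0, the condition ∂U_e/∂x (x, 0) = 0 for the effective potential U_e is equivalent to a₄x⁴ + a₃x³ + a₂x² + a₁x + a₀ = 0, where a₄ = ρq²R²m²/(2π) − mk², a₃ = 2ρq²R²m m_c d/π − m_c d k², a₂ = (ρq²R²/(2π))(2m(I_c + m_c d²) + 4m_c²d²) + mR²k², a₁ = 2ρq²R²m_c d(I_c + m_c d²)/π + m_c d R²k², a₀ = ρq²R²(I_c + m_c d²)²/(2π). -/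
/-! Along the positive `x`-axis the effective potential is
`k² / (2 D(x)) + (ρq²/4π) log (1 - R²/x²)` with `D` quadratic, so its derivative is
`-k² (m x + m_c d) / D² + ρq²R² / (2π x (x² - R²))`. Multiplying by the positive factor
`x (x² - R²) D²` turns the critical-point condition into the quartic. -/

open Real

theorem hasDerivAt_div_quadratic (k a b c x : ℝ) (h : a * x ^ 2 + b * x + c ≠ 0) :
    HasDerivAt (fun x => k / (a * x ^ 2 + b * x + c))
      (-k * (2 * a * x + b) / (a * x ^ 2 + b * x + c) ^ 2) x := by
  have hp : HasDerivAt (fun x => a * x ^ 2 + b * x + c) (2 * a * x + b) x :=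
    ((((hasDerivAt_pow 2 x).const_mul a).add ((hasDerivAt_id x).const_mul b)).add_const c
      ).congr_deriv (by simp only [Nat.cast_ofNat, mul_one]; ring)
  exact ((hasDerivAt_const x k).div hp h).congr_deriv (by ring)

theorem hasDerivAt_log_one_sub_sq_div_sq {R x : ℝ} (hx : x ≠ 0) (hxR : x ^ 2 - R ^ 2 ≠ 0) :
    HasDerivAt (fun x => log (1 - R ^ 2 / x ^ 2)) (2 * R ^ 2 / (x * (x ^ 2 - R ^ 2))) x := by
  have hx2 : x ^ 2 ≠ 0 := pow_ne_zero 2 hx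
  have hg0 : 1 - R ^ 2 / x ^ 2 ≠ 0 := by
    rwa [one_sub_div hx2, div_ne_zero_iff, and_iff_left hx2]
  have hg : HasDerivAt (fun x => 1 - R ^ 2 / x ^ 2) (2 * R ^ 2 / x ^ 3) x :=
    (((hasDerivAt_const x (R ^ 2)).div (hasDerivAt_pow 2 x) hx2).const_sub 1).congr_deriv
      (by field_simp; ring)
  refine (hg.log hg0).congr_deriv ?_
  rw [one_sub_div hx2]
  field_simp

theorem axial_quartic_eq (mc Ic ρ R q d k m x : ℝ) :
    (ρ*q^2*R^2*m^2/(2*π) - m*k^2) * x^4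
        + (2*ρ*q^2*R^2*m*mc*d/π - mc*d*k^2) * x^3
        + ((ρ*q^2*R^2/(2*π)) * (2*m*(Ic + mc*d^2) + 4*mc^2*d^2) + m*R^2*k^2) * x^2
        + (2*ρ*q^2*R^2*mc*d*(Ic + mc*d^2)/π + mc*d*R^2*k^2) * x
        + ρ*q^2*R^2*(Ic + mc*d^2)^2/(2*π)
      = ρ * q ^ 2 * R ^ 2 / (2 * π) * (m * x ^ 2 + 2 * mc * d * x + (Ic + mc * d ^ 2)) ^ 2
        - k ^ 2 * (m * x + mc * d) * (x * (x ^ 2 - R ^ 2)) := by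
  ring

theorem mul_axial_deriv_eq (mc ρ R q d k m x D : ℝ) (hx : x ≠ 0) (hxR : x ^ 2 - R ^ 2 ≠ 0)
    (hD : D ≠ 0) :
    x * (x ^ 2 - R ^ 2) * D ^ 2 *
        (-(k ^ 2 / 2) * (2 * m * x + 2 * mc * d) / D ^ 2
          + ρ * q ^ 2 / (4 * π) * (2 * R ^ 2 / (x * (x ^ 2 - R ^ 2))))
      = ρ * q ^ 2 * R ^ 2 / (2 * π) * D ^ 2 - k ^ 2 * (m * x + mc * d) * (x * (x ^ 2 - R ^ 2)) := by
  have hπ : π ≠ 0 := pi_ne_zero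
  field_simp
  ring

theorem critical_point_quartic_equation_general
    (mc Ic ρ R q d k : ℝ)
    (hR : 0 < R)
    (m : ℝ)
    (hpos : ∀ x : ℝ, R < x → 0 < m*x^2 + 2*mc*d*x + Ic + mc*d^2)
    (Ue : ℝ → ℝ → ℝ)
    (hUe : ∀ x y, Ue x y =
      k^2 / (2*(m*(x^2+y^2) + 2*mc*d*x + Ic + mc*d^2))
        + (ρ*q^2/(4*π)) * Real.log (1 - R^2/(x^2+y^2))) :
    ∀ x : ℝ, R < x →
      (deriv (fun x' => Ue x' 0) x = 0 ↔
        (ρ*q^2*R^2*m^2/(2*π) - m*k^2) * x^4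
        + (2*ρ*q^2*R^2*m*mc*d/π - mc*d*k^2) * x^3
        + ((ρ*q^2*R^2/(2*π)) * (2*m*(Ic + mc*d^2) + 4*mc^2*d^2) + m*R^2*k^2) * x^2
        + (2*ρ*q^2*R^2*mc*d*(Ic + mc*d^2)/π + mc*d*R^2*k^2) * x
        + ρ*q^2*R^2*(Ic + mc*d^2)^2/(2*π) = 0) := by
  intro x hx
  have hx0 : 0 < x := hR.trans hx
  have hxR : 0 < x ^ 2 - R ^ 2 := by nlinarith
  have hD : 0 < m * x ^ 2 + 2 * mc * d * x + (Ic + mc * d ^ 2) := by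
    simpa only [add_assoc] using hpos x hx
  have hUe_axis : (fun x' => Ue x' 0) = fun x' =>
      k ^ 2 / 2 / (m * x' ^ 2 + 2 * mc * d * x' + (Ic + mc * d ^ 2))
        + ρ * q ^ 2 / (4 * π) * log (1 - R ^ 2 / x' ^ 2) := by
    funext x'
    rw [hUe, div_div]
    simp only [ne_eq, OfNat.ofNat_ne_zero, not_false_eq_true, zero_pow, add_zero, add_assoc]
  have hderiv : HasDerivAt (fun x' => Ue x' 0)
      (-(k ^ 2 / 2) * (2 * m * x + 2 * mc * d) / (m * x ^ 2 + 2 * mc * d * x + (Ic + mc * d ^ 2)) ^ 2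
        + ρ * q ^ 2 / (4 * π) * (2 * R ^ 2 / (x * (x ^ 2 - R ^ 2)))) x := by
    rw [hUe_axis]
    exact (hasDerivAt_div_quadratic _ _ _ _ x hD.ne').add
      ((hasDerivAt_log_one_sub_sq_div_sq hx0.ne' hxR.ne').const_mul _)
  rw [hderiv.deriv, axial_quartic_eq,
    ← mul_axial_deriv_eq mc ρ R q d k m x _ hx0.ne' hxR.ne' hD.ne',
    mul_eq_zero_iff_left (by positivity)]

theorem critical_point_quartic_equation
    (mc Ic ρ R q d k : ℝ)
    (hmc : 0 < mc) (hIc : 0 < Ic) (hρ : 0 < ρ) (hR : 0 < R) (hq : 0 < q)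
    (hd : 0 ≤ d)
    (m : ℝ) (hm : m = mc + ρ*π*R^2)
    (hpos : ∀ x : ℝ, R < x → 0 < m*x^2 + 2*mc*d*x + Ic + mc*d^2)
    (Ue : ℝ → ℝ → ℝ)
    (hUe : ∀ x y, Ue x y =
      k^2 / (2*(m*(x^2+y^2) + 2*mc*d*x + Ic + mc*d^2))
        + (ρ*q^2/(4*π)) * Real.log (1 - R^2/(x^2+y^2))) :
    ∀ x : ℝ, R < x →
      (deriv (fun x' => Ue x' 0) x = 0 ↔
        (ρ*q^2*R^2*m^2/(2*π) - m*k^2) * x^4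
        + (2*ρ*q^2*R^2*m*mc*d/π - mc*d*k^2) * x^3
        + ((ρ*q^2*R^2/(2*π)) * (2*m*(Ic + mc*d^2) + 4*mc^2*d^2) + m*R^2*k^2) * x^2
        + (2*ρ*q^2*R^2*mc*d*(Ic + mc*d^2)/π + mc*d*R^2*k^2) * x
        + ρ*q^2*R^2*(Ic + mc*d^2)^2/(2*π) = 0) :=
  critical_point_quartic_equation_general mc Ic ρ R q d k hR m hpos Ue hUe
end

section
/- Consider the vector field u = −Y ∂/∂X + X ∂/∂Y + ∂/∂Θ − 𝒫y ∂/∂𝒫x + 𝒫x ∂/∂𝒫y on ℝ⁵ (coordinates X, Y, Θ, 𝒫x, 𝒫y). The Hamiltonian H(X, Y, Θ, Px, Py, Pθ) of the unbalanced foil (as defined via the matrix Q(Θ)) is invariant under u: the Lie derivative of H along the Hamiltonian lift of u vanishes, equivalently u is the Hamiltonian vector field of K = Pθ + Py X − Px Y and {K, H} = 0. -/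
/-!
Rotating the plane of the foil by an angle `t`, together with its orientation `Θ` and the
planar momenta, is the flow of `u`. Writing `Q(Θ) = Rot(Θ) Q(0) Rot(Θ)ᵀ`, the kinetic term
becomes `½ ⟨w, Q(0)⁻¹ w⟩` in the body-frame momentum `w = Rot(Θ)ᵀ 𝒫`, and both `w` and
`X² + Y²` are constant along the flow. Hence `H` is constant along the flow, and differentiating
at `t = 0` with the chain rule gives `{K, H} = 0`.
-/

open Real Matrix

theorem hasDerivAt_comp_eq_sum_mul_deriv_update {ι : Type*} [Fintype ι] [DecidableEq ι]
    {f : (ι → ℝ) → ℝ} {γ : ℝ → ι → ℝ} {v : ι → ℝ} {t : ℝ}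
    (hγ : HasDerivAt γ v t) (hf : DifferentiableAt ℝ f (γ t)) :
    HasDerivAt (f ∘ γ) (∑ i, v i * deriv (fun s => f (Function.update (γ t) i s)) (γ t i)) t := by
  have hpartial : ∀ i, deriv (fun s => f (Function.update (γ t) i s)) (γ t i)
      = fderiv ℝ f (γ t) (Pi.single i 1) := fun i =>
    (hf.hasFDerivAt.comp_hasDerivAt_of_eq (γ t i) (hasDerivAt_update (γ t) i (γ t i))
      (Function.update_eq_self i (γ t)).symm).deriv
  refine (hf.hasFDerivAt.comp_hasDerivAt t hγ).congr_deriv ?_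
  conv_lhs => rw [← Finset.univ_sum_single v]
  simp only [map_sum, hpartial]
  refine Finset.sum_congr rfl fun i _ => ?_
  rw [← smul_eq_mul, ← map_smul, ← Pi.single_smul', smul_eq_mul, mul_one]

theorem sum_mul_deriv_update_eq_zero_of_invariant {ι : Type*} [Fintype ι] [DecidableEq ι]
    {f : (ι → ℝ) → ℝ} {γ : ℝ → ι → ℝ} {x v : ι → ℝ} {t : ℝ} (hγt : γ t = x)
    (hγ : HasDerivAt γ v t) (hf : DifferentiableAt ℝ f x) (hinv : ∀ s, f (γ s) = f x) :
    ∑ i, v i * deriv (fun s => f (Function.update x i s)) (x i) = 0 := by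
  subst hγt
  refine (hasDerivAt_comp_eq_sum_mul_deriv_update hγ hf).unique ?_
  simpa [Function.comp_def, hinv] using hasDerivAt_const t (f (γ t))

theorem DifferentiableAt.dotProduct_mulVec_self {n E : Type*} [Fintype n]
    [NormedAddCommGroup E] [NormedSpace ℝ E] {u : E → n → ℝ} {z : E}
    (hu : DifferentiableAt ℝ u z) (B : Matrix n n ℝ) :
    DifferentiableAt ℝ (fun p => u p ⬝ᵥ (B *ᵥ u p)) z := by
  have hcomp : ∀ i, DifferentiableAt ℝ (fun p => u p i) z := differentiableAt_pi.1 hu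
  simp only [dotProduct, mulVec]
  fun_prop

theorem hasDerivAt_mul_cos_sub_mul_sin (a b t : ℝ) :
    HasDerivAt (fun t => a * cos t - b * sin t) (-(a * sin t) - b * cos t) t := by
  refine (((hasDerivAt_cos t).const_mul a).sub ((hasDerivAt_sin t).const_mul b)).congr_deriv ?_
  ring

theorem hasDerivAt_mul_sin_add_mul_cos (a b t : ℝ) :
    HasDerivAt (fun t => a * sin t + b * cos t) (a * cos t - b * sin t) t := by
  refine (((hasDerivAt_sin t).const_mul a).add ((hasDerivAt_cos t).const_mul b)).congr_deriv ?_
  ring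

theorem inv_mul_mul_transpose {n : Type*} [Fintype n] [DecidableEq n]
    {U : Matrix n n ℝ} (hU : Uᵀ * U = 1) (A : Matrix n n ℝ) :
    (U * A * Uᵀ)⁻¹ = U * A⁻¹ * Uᵀ := by
  rw [Matrix.mul_inv_rev, Matrix.mul_inv_rev, inv_eq_left_inv hU,
    inv_eq_left_inv (mul_eq_one_comm.mp hU), Matrix.mul_assoc]

theorem dotProduct_mulVec_mul_mul_transpose {m n : Type*} [Fintype m] [Fintype n]
    (U : Matrix m n ℝ) (A : Matrix n n ℝ) (v : m → ℝ) :
    v ⬝ᵥ ((U * A * Uᵀ) *ᵥ v) = (Uᵀ *ᵥ v) ⬝ᵥ (A *ᵥ (Uᵀ *ᵥ v)) := by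
  rw [← mulVec_mulVec, ← mulVec_mulVec, dotProduct_mulVec, mulVec_transpose]

noncomputable def rotZ (t : ℝ) : Matrix (Fin 3) (Fin 3) ℝ :=
  !![cos t, -sin t, 0; sin t, cos t, 0; 0, 0, 1]

theorem rotZ_transpose_mul_self (t : ℝ) : (rotZ t)ᵀ * rotZ t = 1 := by
  ext i j
  fin_cases i <;> fin_cases j <;> simp [rotZ, Matrix.mul_apply, Fin.sum_univ_three] <;>
    ring_nf <;> simp

theorem rotZ_add (s t : ℝ) : rotZ (s + t) = rotZ s * rotZ t := by
  ext i j
  fin_cases i <;> fin_cases j <;>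
    simp [rotZ, Matrix.mul_apply, Fin.sum_univ_three, cos_add, sin_add] <;> ring

theorem inertia_eq_rotZ_mul_mul_transpose (m a J θ : ℝ) :
    !![m, 0, -a * sin θ; 0, m, a * cos θ; -a * sin θ, a * cos θ, J]
      = rotZ θ * !![m, 0, 0; 0, m, a; 0, a, J] * (rotZ θ)ᵀ := by
  ext i j
  fin_cases i <;> fin_cases j <;> simp [rotZ, Matrix.mul_apply, Fin.sum_univ_three] <;>
    first | linear_combination (-m) * sin_sq_add_cos_sq θ | ring

/-- A phase-space point is `z = ![X, Y, Θ, Px, Py, Pθ]`. -/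
noncomputable def foilFlow (t : ℝ) (z : Fin 6 → ℝ) : Fin 6 → ℝ :=
  ![z 0 * cos t - z 1 * sin t, z 0 * sin t + z 1 * cos t, z 2 + t,
    z 3 * cos t - z 4 * sin t, z 3 * sin t + z 4 * cos t, z 5]

noncomputable def shiftedMomentum (b : ℝ) (z : Fin 6 → ℝ) : Fin 3 → ℝ :=
  ![z 3 + b * z 0 / (z 0 ^ 2 + z 1 ^ 2), z 4 + b * z 1 / (z 0 ^ 2 + z 1 ^ 2), z 5]

noncomputable def bodyMomentum (b : ℝ) (z : Fin 6 → ℝ) : Fin 3 → ℝ :=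
  (rotZ (z 2))ᵀ *ᵥ shiftedMomentum b z

noncomputable def foilHamiltonian (B : Matrix (Fin 3) (Fin 3) ℝ) (b c R : ℝ) (z : Fin 6 → ℝ) : ℝ :=
  (1/2) * (bodyMomentum b z ⬝ᵥ (B *ᵥ bodyMomentum b z))
    - c * (log (z 0 ^ 2 + z 1 ^ 2) - log (z 0 ^ 2 + z 1 ^ 2 - R ^ 2))

theorem foilFlow_zero (z : Fin 6 → ℝ) : foilFlow 0 z = z := by
  ext i
  fin_cases i <;> simp [foilFlow]

theorem hasDerivAt_foilFlow (z : Fin 6 → ℝ) :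
    HasDerivAt (fun t => foilFlow t z) ![-z 1, z 0, 1, -z 4, z 3, 0] 0 := by
  refine hasDerivAt_pi.2 fun i => ?_
  fin_cases i <;> simp only [foilFlow, Fin.isValue, Fin.zero_eta, Fin.mk_one, Fin.reduceFinMk,
    cons_val_zero, cons_val_one, cons_val]
  · simpa using hasDerivAt_mul_cos_sub_mul_sin (z 0) (z 1) 0
  · simpa using hasDerivAt_mul_sin_add_mul_cos (z 0) (z 1) 0
  · exact (hasDerivAt_id 0).const_add (z 2)
  · simpa using hasDerivAt_mul_cos_sub_mul_sin (z 3) (z 4) 0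
  · simpa using hasDerivAt_mul_sin_add_mul_cos (z 3) (z 4) 0
  · exact hasDerivAt_const 0 (z 5)

theorem foilFlow_radius_sq (t : ℝ) (z : Fin 6 → ℝ) :
    foilFlow t z 0 ^ 2 + foilFlow t z 1 ^ 2 = z 0 ^ 2 + z 1 ^ 2 := by
  simp only [foilFlow, Fin.isValue, cons_val_zero, cons_val_one]
  linear_combination (z 0 ^ 2 + z 1 ^ 2) * sin_sq_add_cos_sq t

theorem shiftedMomentum_foilFlow (b t : ℝ) (z : Fin 6 → ℝ) :
    shiftedMomentum b (foilFlow t z) = rotZ t *ᵥ shiftedMomentum b z := by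
  unfold shiftedMomentum
  rw [foilFlow_radius_sq]
  ext i
  fin_cases i <;> simp [foilFlow, rotZ, mulVec, dotProduct, Fin.sum_univ_three] <;> ring

theorem bodyMomentum_foilFlow (b t : ℝ) (z : Fin 6 → ℝ) :
    bodyMomentum b (foilFlow t z) = bodyMomentum b z := by
  have hθ : foilFlow t z 2 = z 2 + t := rfl
  rw [bodyMomentum, bodyMomentum, shiftedMomentum_foilFlow, hθ, add_comm, rotZ_add, transpose_mul,
    mulVec_mulVec, Matrix.mul_assoc, rotZ_transpose_mul_self, Matrix.mul_one]

theorem foilHamiltonian_foilFlow (B : Matrix (Fin 3) (Fin 3) ℝ) (b c R t : ℝ) (z : Fin 6 → ℝ) :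
    foilHamiltonian B b c R (foilFlow t z) = foilHamiltonian B b c R z := by
  rw [foilHamiltonian, foilHamiltonian, bodyMomentum_foilFlow, foilFlow_radius_sq]

theorem differentiableAt_bodyMomentum (b : ℝ) {z : Fin 6 → ℝ} (hz : z 0 ^ 2 + z 1 ^ 2 ≠ 0) :
    DifferentiableAt ℝ (bodyMomentum b) z := by
  refine differentiableAt_pi.2 fun i => ?_
  fin_cases i <;>
    simp [bodyMomentum, shiftedMomentum, rotZ, mulVec, dotProduct, Fin.sum_univ_three] <;>
    fun_prop (disch := exact hz)

theorem differentiableAt_foilHamiltonian (B : Matrix (Fin 3) (Fin 3) ℝ) (b c : ℝ) {R : ℝ}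
    {z : Fin 6 → ℝ} (hz : R ^ 2 < z 0 ^ 2 + z 1 ^ 2) :
    DifferentiableAt ℝ (foilHamiltonian B b c R) z := by
  have hr : z 0 ^ 2 + z 1 ^ 2 ≠ 0 := ((sq_nonneg R).trans_lt hz).ne'
  have hrR : z 0 ^ 2 + z 1 ^ 2 - R ^ 2 ≠ 0 := by linarith
  have hkin := (differentiableAt_bodyMomentum b hr).dotProduct_mulVec_self B
  unfold foilHamiltonian
  fun_prop (disch := assumption)

theorem symmetry_field_is_hamiltonian_vector_field_of_K_general
    (mc Ic R ρ q : ℝ) (d : ℝ)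
    (Q : ℝ → Matrix (Fin 3) (Fin 3) ℝ)
    (hQ : ∀ Θ, Q Θ = !![mc + ρ*π*R^2, 0, -mc*d*Real.sin Θ;
                        0, mc + ρ*π*R^2, mc*d*Real.cos Θ;
                        -mc*d*Real.sin Θ, mc*d*Real.cos Θ, Ic + mc*d^2])
    (H : ℝ → ℝ → ℝ → ℝ → ℝ → ℝ → ℝ)
    (hH : ∀ X Y Θ Px Py Pθ,
      H X Y Θ Px Py Pθ =
        (1/2) * (![Px + ρ*q*R^2*X/(X^2+Y^2), Py + ρ*q*R^2*Y/(X^2+Y^2), Pθ] ⬝ᵥ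
          ((Q Θ)⁻¹ *ᵥ ![Px + ρ*q*R^2*X/(X^2+Y^2), Py + ρ*q*R^2*Y/(X^2+Y^2), Pθ]))
        - (ρ*q^2/(4*π)) * (Real.log (X^2+Y^2) - Real.log (X^2+Y^2 - R^2)))
    (K : ℝ → ℝ → ℝ → ℝ → ℝ → ℝ → ℝ)
    (hK : ∀ X Y Θ Px Py Pθ, K X Y Θ Px Py Pθ = Pθ + Py*X - Px*Y) :
    ∀ X Y Θ Px Py Pθ : ℝ, X^2 + Y^2 > R^2 →
      -- the Hamiltonian vector field of K is the symmetry field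
      -- u = -Y ∂X + X ∂Y + ∂Θ - Py ∂Px + Px ∂Py (with zero ∂Pθ-component)
      (deriv (fun px => K X Y Θ px Py Pθ) Px = -Y ∧
       deriv (fun py => K X Y Θ Px py Pθ) Py = X ∧
       deriv (fun pθ => K X Y Θ Px Py pθ) Pθ = 1 ∧
       - deriv (fun x => K x Y Θ Px Py Pθ) X = -Py ∧
       - deriv (fun y => K X y Θ Px Py Pθ) Y = Px ∧
       - deriv (fun θ => K X Y θ Px Py Pθ) Θ = 0) ∧
      -- H is invariant under u, i.e. {K, H} = 0
      (Py * deriv (fun px => H X Y Θ px Py Pθ) Px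
       - Px * deriv (fun py => H X Y Θ Px py Pθ) Py
       - (-Y * deriv (fun x => H x Y Θ Px Py Pθ) X
          + X * deriv (fun y => H X y Θ Px Py Pθ) Y
          + deriv (fun θ => H X Y θ Px Py Pθ) Θ) = 0) := by
  intro X Y Θ Px Py Pθ hXY
  refine ⟨by simp [hK], ?_⟩
  set B := (!![mc + ρ*π*R^2, 0, 0; 0, mc + ρ*π*R^2, mc*d; 0, mc*d, Ic + mc*d^2])⁻¹
  have hQinv : ∀ Θ, (Q Θ)⁻¹ = rotZ Θ * B * (rotZ Θ)ᵀ := fun Θ => by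
    rw [hQ, ← inv_mul_mul_transpose (rotZ_transpose_mul_self Θ),
      ← inertia_eq_rotZ_mul_mul_transpose]
    simp only [neg_mul]
  set f : (Fin 6 → ℝ) → ℝ := fun z => H (z 0) (z 1) (z 2) (z 3) (z 4) (z 5)
  have hf : f = foilHamiltonian B (ρ*q*R^2) (ρ*q^2/(4*π)) R := by
    funext z
    simp only [f, hH, hQinv, dotProduct_mulVec_mul_mul_transpose]
    rfl
  set z : Fin 6 → ℝ := ![X, Y, Θ, Px, Py, Pθ]
  have hLie := sum_mul_deriv_update_eq_zero_of_invariant (foilFlow_zero z) (hasDerivAt_foilFlow z)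
    (hf ▸ differentiableAt_foilHamiltonian B _ _ hXY) (fun t => by rw [hf, foilHamiltonian_foilFlow])
  rw [Fin.sum_univ_six] at hLie
  simp only [f, z, Fin.isValue, cons_val_zero, cons_val_one, cons_val, Function.update_self,
    Function.update_of_ne, ne_eq, one_ne_zero, zero_ne_one, not_false_eq_true, Fin.reduceEq,
    neg_mul, one_mul, zero_mul, add_zero] at hLie
  linarith

theorem symmetry_field_is_hamiltonian_vector_field_of_K
    (mc Ic R ρ q : ℝ) (d : ℝ)
    (hmc : 0 < mc) (hIc : 0 < Ic) (hR : 0 < R) (hρ : 0 < ρ) (hq : 0 < q) (hd : 0 ≤ d)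
    (Q : ℝ → Matrix (Fin 3) (Fin 3) ℝ)
    (hQ : ∀ Θ, Q Θ = !![mc + ρ*π*R^2, 0, -mc*d*Real.sin Θ;
                        0, mc + ρ*π*R^2, mc*d*Real.cos Θ;
                        -mc*d*Real.sin Θ, mc*d*Real.cos Θ, Ic + mc*d^2])
    (hdet : ∀ Θ, (Q Θ).det ≠ 0)
    (H : ℝ → ℝ → ℝ → ℝ → ℝ → ℝ → ℝ)
    (hH : ∀ X Y Θ Px Py Pθ,
      H X Y Θ Px Py Pθ =
        (1/2) * (![Px + ρ*q*R^2*X/(X^2+Y^2), Py + ρ*q*R^2*Y/(X^2+Y^2), Pθ] ⬝ᵥ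
          ((Q Θ)⁻¹ *ᵥ ![Px + ρ*q*R^2*X/(X^2+Y^2), Py + ρ*q*R^2*Y/(X^2+Y^2), Pθ]))
        - (ρ*q^2/(4*π)) * (Real.log (X^2+Y^2) - Real.log (X^2+Y^2 - R^2)))
    (K : ℝ → ℝ → ℝ → ℝ → ℝ → ℝ → ℝ)
    (hK : ∀ X Y Θ Px Py Pθ, K X Y Θ Px Py Pθ = Pθ + Py*X - Px*Y) :
    ∀ X Y Θ Px Py Pθ : ℝ, X^2 + Y^2 > R^2 →
      -- the Hamiltonian vector field of K is the symmetry field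
      -- u = -Y ∂X + X ∂Y + ∂Θ - Py ∂Px + Px ∂Py (with zero ∂Pθ-component)
      (deriv (fun px => K X Y Θ px Py Pθ) Px = -Y ∧
       deriv (fun py => K X Y Θ Px py Pθ) Py = X ∧
       deriv (fun pθ => K X Y Θ Px Py pθ) Pθ = 1 ∧
       - deriv (fun x => K x Y Θ Px Py Pθ) X = -Py ∧
       - deriv (fun y => K X y Θ Px Py Pθ) Y = Px ∧
       - deriv (fun θ => K X Y θ Px Py Pθ) Θ = 0) ∧
      -- H is invariant under u, i.e. {K, H} = 0
      (Py * deriv (fun px => H X Y Θ px Py Pθ) Px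
       - Px * deriv (fun py => H X Y Θ Px py Pθ) Py
       - (-Y * deriv (fun x => H x Y Θ Px Py Pθ) X
          + X * deriv (fun y => H X y Θ Px Py Pθ) Y
          + deriv (fun θ => H X Y θ Px Py Pθ) Θ) = 0) :=
  symmetry_field_is_hamiltonian_vector_field_of_K_general mc Ic R ρ q d Q hQ H hH K hK
end

section
/- lim_{s→∞} U(s) = 0 for the effective potential U(s) = f²/(2ms²) + (ρq²/(4π))·ln(1 − R²/s²), and if f > f_cr then U(s₀) > 0 where s₀ is the maximum point; consequently for every energy level 0 < h < U(s₀) the set {s > R : U(s) < h} has exactly two connected components (separated by an interval around s₀ where U ≥ h). -/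
/-!
Write `U(s) = A/s² + B log(1 - R²/s²)` with `A = f²/(2m)` and `B = ρq²/(4π)`. The condition
`f > f_cr` says exactly `B R² < A`, and `s₀² (A - BR²) = AR²`. Then
`U'(s) = 2(A - BR²)(s₀² - s²)/(s³(s² - R²))`, so `U` increases on `(R, s₀]` and decreases on
`[s₀, ∞)`. Since `U → 0` at infinity, `U(s₀) > 0`, and since `U → -∞` at `R⁺`, every level
`0 < h < U(s₀)` is crossed exactly once on each side of `s₀`.
-/

open Real Filter Set Topology

section Unimodal

variable {U : ℝ → ℝ} {R s₀ h : ℝ}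

theorem StrictAntiOn.lt_of_tendsto_atTop {L : ℝ} (hanti : StrictAntiOn U (Ici s₀))
    (htop : Tendsto U atTop (𝓝 L)) : L < U s₀ := by
  have hle : L ≤ U (s₀ + 1) := by
    refine le_of_tendsto htop ?_
    filter_upwards [eventually_gt_atTop (s₀ + 1)] with x hx
    exact (hanti (mem_Ici.2 (by linarith)) (mem_Ici.2 (by linarith)) hx).le
  exact hle.trans_lt (hanti self_mem_Ici (mem_Ici.2 (by linarith)) (by linarith))

theorem exists_lt_iff_lt_of_strictMonoOn_Ioc (hR : R < s₀) (hcont : ContinuousOn U (Ioc R s₀))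
    (hmono : StrictMonoOn U (Ioc R s₀)) (hleft : ∀ᶠ x in 𝓝[>] R, U x < h) (hh : h < U s₀) :
    ∃ a ∈ Ioo R s₀, ∀ s ∈ Ioc R s₀, U s < h ↔ s < a := by
  obtain ⟨s₁, hs₁h, hs₁⟩ := (hleft.and (Ioo_mem_nhdsGT hR)).exists
  obtain ⟨a, ha, rfl⟩ := intermediate_value_Ioo hs₁.2.le
    (hcont.mono (Icc_subset_Ioc_iff hs₁.2.le |>.2 ⟨hs₁.1, le_rfl⟩)) ⟨hs₁h, hh⟩
  exact ⟨a, ⟨hs₁.1.trans ha.1, ha.2⟩, fun s hs =>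
    hmono.lt_iff_lt hs ⟨hs₁.1.trans ha.1, ha.2.le⟩⟩

theorem exists_lt_iff_lt_of_strictAntiOn_Ici (hcont : ContinuousOn U (Ici s₀))
    (hanti : StrictAntiOn U (Ici s₀)) (hright : ∀ᶠ x in atTop, U x < h) (hh : h < U s₀) :
    ∃ b ∈ Ioi s₀, ∀ s ∈ Ici s₀, U s < h ↔ b < s := by
  obtain ⟨s₂, hs₂h, hs₂⟩ := (hright.and (eventually_gt_atTop s₀)).exists
  obtain ⟨b, hb, rfl⟩ := intermediate_value_Ioo' hs₂.le
    (hcont.mono Icc_subset_Ici_self) ⟨hs₂h, hh⟩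
  exact ⟨b, hb.1, fun s hs => hanti.lt_iff_gt hs (mem_Ici.2 hb.1.le)⟩

theorem sublevel_eq_Ioo_union_Ioi (hR : R < s₀) (hcont : ContinuousOn U (Ioi R))
    (hmono : StrictMonoOn U (Ioc R s₀)) (hanti : StrictAntiOn U (Ici s₀))
    (hleft : ∀ᶠ x in 𝓝[>] R, U x < h) (hright : ∀ᶠ x in atTop, U x < h) (hh : h < U s₀) :
    ∃ a b : ℝ, R < a ∧ a < s₀ ∧ s₀ < b ∧
      {s : ℝ | R < s ∧ U s < h} = Ioo R a ∪ Ioi b := by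
  obtain ⟨a, ⟨hRa, has₀⟩, ha⟩ :=
    exists_lt_iff_lt_of_strictMonoOn_Ioc hR (hcont.mono Ioc_subset_Ioi_self) hmono hleft hh
  obtain ⟨b, hs₀b, hb⟩ := exists_lt_iff_lt_of_strictAntiOn_Ici
    (hcont.mono (Ici_subset_Ioi.2 hR)) hanti hright hh
  refine ⟨a, b, hRa, has₀, hs₀b, ?_⟩
  ext s
  simp only [mem_ofPred_eq, mem_union, mem_Ioo, mem_Ioi]
  rcases le_total s s₀ with hs | hs
  · have hbs : ¬ b < s := not_lt.2 (hs.trans hs₀b.le)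
    by_cases hRs : R < s
    · simp [ha s ⟨hRs, hs⟩, hRs, hbs]
    · simp [hRs, hbs]
  · have hRs : R < s := hR.trans_le hs
    have has : ¬ s < a := not_lt.2 (has₀.le.trans hs)
    simp [hb s hs, hRs, has]

end Unimodal

noncomputable def effectivePotential (A B R s : ℝ) : ℝ :=
  A / s ^ 2 + B * log (1 - R ^ 2 / s ^ 2)

section EffectivePotential

variable {A B R s₀ : ℝ}

theorem tendsto_effectivePotential_atTop :
    Tendsto (effectivePotential A B R) atTop (𝓝 0) := by
  have hg : ContinuousAt (fun t : ℝ => A * t ^ 2 + B * log (1 - R ^ 2 * t ^ 2)) 0 := by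
    fun_prop (disch := norm_num)
  convert hg.tendsto.comp tendsto_inv_atTop_zero using 2 with s
  · ext s
    simp [effectivePotential, div_eq_mul_inv]
  · simp

theorem tendsto_effectivePotential_nhdsGT (hR : 0 < R) (hB : 0 < B) :
    Tendsto (effectivePotential A B R) (𝓝[>] R) atBot := by
  have hcont : ContinuousAt (fun s : ℝ => 1 - R ^ 2 / s ^ 2) R := by
    fun_prop (disch := positivity)
  have hinner : Tendsto (fun s : ℝ => 1 - R ^ 2 / s ^ 2) (𝓝[>] R) (𝓝[>] 0) := by
    refine tendsto_nhdsWithin_iff.2 ⟨?_, ?_⟩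
    · simpa [div_self (pow_ne_zero 2 hR.ne')] using hcont.tendsto.mono_left nhdsWithin_le_nhds
    · filter_upwards [self_mem_nhdsWithin] with s (hs : R < s)
      rw [mem_Ioi, sub_pos, div_lt_one (pow_pos (hR.trans hs) 2)]
      exact pow_lt_pow_left₀ hs hR.le two_ne_zero
  have hfirst : ContinuousAt (fun s : ℝ => A / s ^ 2) R := by fun_prop (disch := positivity)
  exact (hfirst.tendsto.mono_left nhdsWithin_le_nhds).add_atBot
    ((tendsto_log_nhdsGT_zero.comp hinner).const_mul_atBot hB)

theorem hasDerivAt_effectivePotential (hR : 0 < R) {s : ℝ} (hs : R < s) :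
    HasDerivAt (effectivePotential A B R)
      (2 * (A * R ^ 2 - (A - B * R ^ 2) * s ^ 2) / (s ^ 3 * (s ^ 2 - R ^ 2))) s := by
  have hs0 : s ≠ 0 := (hR.trans hs).ne'
  have hRs : R ^ 2 < s ^ 2 := pow_lt_pow_left₀ hs hR.le two_ne_zero
  have hinner : 1 - R ^ 2 * (s ^ 2)⁻¹ ≠ 0 := by
    rw [← div_eq_mul_inv]
    exact sub_ne_zero.2 ((div_lt_one (pow_pos (hR.trans hs) 2)).2 hRs).ne'
  have hinv : HasDerivAt (fun x : ℝ => (x ^ 2)⁻¹) (-(2 * s) / (s ^ 2) ^ 2) s :=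
    ((hasDerivAt_pow 2 s).inv (pow_ne_zero 2 hs0)).congr_deriv (by norm_num)
  have hlog := ((hinv.const_mul (R ^ 2)).const_sub 1).log hinner
  have hfun : effectivePotential A B R =
      fun x => A * (x ^ 2)⁻¹ + B * log (1 - R ^ 2 * (x ^ 2)⁻¹) := by
    ext x; simp only [effectivePotential, div_eq_mul_inv]
  rw [hfun]
  refine ((hinv.const_mul A).add (hlog.const_mul B)).congr_deriv ?_
  have : s ^ 2 - R ^ 2 ≠ 0 := sub_ne_zero.2 hRs.ne'
  field_simp
  ring

theorem continuousOn_effectivePotential (hR : 0 < R) :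
    ContinuousOn (effectivePotential A B R) (Ioi R) := fun _ hs =>
  (hasDerivAt_effectivePotential hR hs).continuousAt.continuousWithinAt

theorem radius_lt_of_critical (hR : 0 < R) (hB : 0 < B) (hBA : B * R ^ 2 < A) (hs₀ : 0 < s₀)
    (hcrit : s₀ ^ 2 * (A - B * R ^ 2) = A * R ^ 2) : R < s₀ := by
  have hR4 : 0 < B * R ^ 4 := mul_pos hB (pow_pos hR 4)
  have hsq : R ^ 2 * (A - B * R ^ 2) < s₀ ^ 2 * (A - B * R ^ 2) := by
    rw [hcrit]; nlinarith
  exact lt_of_pow_lt_pow_left₀ 2 hs₀.le (lt_of_mul_lt_mul_right hsq (sub_pos.2 hBA).le)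

theorem strictMonoOn_effectivePotential (hR : 0 < R) (hBA : B * R ^ 2 < A)
    (hcrit : s₀ ^ 2 * (A - B * R ^ 2) = A * R ^ 2) :
    StrictMonoOn (effectivePotential A B R) (Ioc R s₀) := by
  refine strictMonoOn_of_hasDerivWithinAt_pos (convex_Ioc R s₀)
    ((continuousOn_effectivePotential hR).mono Ioc_subset_Ioi_self)
    (fun s hs => (hasDerivAt_effectivePotential hR (interior_subset hs).1).hasDerivWithinAt)
    fun s hs => ?_
  rw [interior_Ioc] at hs
  have hs0 : 0 < s := hR.trans hs.1
  have hss₀ : s ^ 2 < s₀ ^ 2 := pow_lt_pow_left₀ hs.2 hs0.le two_ne_zero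
  have hRs : R ^ 2 < s ^ 2 := pow_lt_pow_left₀ hs.1 hR.le two_ne_zero
  have hnum : (A - B * R ^ 2) * s ^ 2 < A * R ^ 2 := by
    rw [← hcrit, mul_comm]; exact mul_lt_mul_of_pos_right hss₀ (sub_pos.2 hBA)
  exact div_pos (by linarith) (mul_pos (pow_pos hs0 3) (sub_pos.2 hRs))

theorem strictAntiOn_effectivePotential (hR : 0 < R) (hBA : B * R ^ 2 < A) (hRs₀ : R < s₀)
    (hcrit : s₀ ^ 2 * (A - B * R ^ 2) = A * R ^ 2) :
    StrictAntiOn (effectivePotential A B R) (Ici s₀) := by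
  refine strictAntiOn_of_hasDerivWithinAt_neg (convex_Ici s₀)
    ((continuousOn_effectivePotential hR).mono (Ici_subset_Ioi.2 hRs₀))
    (fun s hs => (hasDerivAt_effectivePotential hR
      (hRs₀.trans_le (interior_subset hs))).hasDerivWithinAt)
    fun s hs => ?_
  rw [interior_Ici] at hs
  have hs0 : 0 < s := hR.trans (hRs₀.trans hs)
  have hss₀ : s₀ ^ 2 < s ^ 2 := pow_lt_pow_left₀ hs (hR.trans hRs₀).le two_ne_zero
  have hRs : R ^ 2 < s ^ 2 := pow_lt_pow_left₀ (hRs₀.trans hs) hR.le two_ne_zero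
  have hnum : A * R ^ 2 < (A - B * R ^ 2) * s ^ 2 := by
    rw [← hcrit, mul_comm _ (s ^ 2)]; exact mul_lt_mul_of_pos_right hss₀ (sub_pos.2 hBA)
  exact div_neg_of_neg_of_pos (by linarith) (mul_pos (pow_pos hs0 3) (sub_pos.2 hRs))

end EffectivePotential

section Parameters

variable {m ρ R q f : ℝ}

theorem lt_of_critical_force_lt (hm : 0 < m) (hρ : 0 < ρ) (hR : 0 < R)
    (hf : |q| * R * sqrt (ρ * m / (2 * π)) < f) : ρ * m * q ^ 2 * R ^ 2 < 2 * π * f ^ 2 := by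
  have hsq := pow_lt_pow_left₀ hf (by positivity) two_ne_zero
  rw [mul_pow, mul_pow, sq_abs, sq_sqrt (by positivity)] at hsq
  have hπ := two_pi_pos
  calc ρ * m * q ^ 2 * R ^ 2 = q ^ 2 * R ^ 2 * (ρ * m / (2 * π)) * (2 * π) := by field_simp
    _ < f ^ 2 * (2 * π) := mul_lt_mul_of_pos_right hsq hπ
    _ = 2 * π * f ^ 2 := mul_comm _ _

theorem coeff_sub_eq (hm : m ≠ 0) :
    f ^ 2 / (2 * m) - ρ * q ^ 2 / (4 * π) * R ^ 2 =
      (2 * π * f ^ 2 - ρ * m * q ^ 2 * R ^ 2) / (4 * π * m) := by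
  have := pi_pos.ne'
  field_simp
  ring

theorem coeff_lt_of_critical_force_lt (hm : 0 < m) (hρ : 0 < ρ) (hR : 0 < R)
    (hf : |q| * R * sqrt (ρ * m / (2 * π)) < f) :
    ρ * q ^ 2 / (4 * π) * R ^ 2 < f ^ 2 / (2 * m) := by
  have hD := sub_pos.2 (lt_of_critical_force_lt hm hρ hR hf)
  rw [← sub_pos, coeff_sub_eq hm.ne']
  positivity

theorem critical_radius_sq (hm : 0 < m) (hD : ρ * m * q ^ 2 * R ^ 2 < 2 * π * f ^ 2) {s₀ : ℝ}
    (hs₀ : s₀ = R * f * sqrt (2 * π / (2 * π * f ^ 2 - ρ * m * q ^ 2 * R ^ 2))) :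
    s₀ ^ 2 * (f ^ 2 / (2 * m) - ρ * q ^ 2 / (4 * π) * R ^ 2) = f ^ 2 / (2 * m) * R ^ 2 := by
  have hπ := pi_pos
  have hD' := sub_pos.2 hD
  rw [coeff_sub_eq hm.ne', hs₀, mul_pow, mul_pow, sq_sqrt (div_pos two_pi_pos hD').le]
  generalize 2 * π * f ^ 2 - ρ * m * q ^ 2 * R ^ 2 = D at hD' ⊢
  field_simp
  norm_num

end Parameters

theorem effective_potential_sublevel_two_components
    (m ρ R q f : ℝ) (hm : 0 < m) (hρ : 0 < ρ) (hR : 0 < R) (hq : 0 < q)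
    (hf : |q| * R * Real.sqrt (ρ*m/(2*π)) < f)
    (U : ℝ → ℝ)
    (hU : ∀ s, U s = f^2/(2*m*s^2) + (ρ*q^2/(4*π)) * Real.log (1 - R^2/s^2))
    (s₀ : ℝ) (hs₀ : s₀ = R * f * Real.sqrt (2*π / (2*π*f^2 - ρ*m*q^2*R^2))) :
    Tendsto U atTop (nhds 0) ∧
    0 < U s₀ ∧
    ∀ h : ℝ, 0 < h → h < U s₀ →
      ∃ a b : ℝ, R < a ∧ a < s₀ ∧ s₀ < b ∧
        {s : ℝ | R < s ∧ U s < h} = Set.Ioo R a ∪ Set.Ioi b := by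
  have hD := lt_of_critical_force_lt hm hρ hR hf
  have hBA := coeff_lt_of_critical_force_lt hm hρ hR hf
  have hcrit := critical_radius_sq hm hD hs₀
  have hf0 : 0 < f := hf.trans_le' (by positivity)
  have hs₀pos : 0 < s₀ := by
    have := sub_pos.2 hD
    rw [hs₀]; positivity
  have hRs₀ := radius_lt_of_critical hR (by positivity) hBA hs₀pos hcrit
  obtain rfl : U = effectivePotential (f ^ 2 / (2 * m)) (ρ * q ^ 2 / (4 * π)) R :=
    funext fun s => by rw [hU, effectivePotential, div_div]
  have htop := tendsto_effectivePotential_atTop (A := f ^ 2 / (2 * m))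
    (B := ρ * q ^ 2 / (4 * π)) (R := R)
  have hanti := strictAntiOn_effectivePotential hR hBA hRs₀ hcrit
  refine ⟨htop, hanti.lt_of_tendsto_atTop htop, fun h h0 hh => ?_⟩
  exact sublevel_eq_Ioo_union_Ioi hRs₀ (continuousOn_effectivePotential hR)
    (strictMonoOn_effectivePotential hR hBA hcrit) hanti
    ((tendsto_effectivePotential_nhdsGT hR (by positivity)).eventually_lt_atBot h)
    (htop.eventually_lt_const h0) hh
end
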